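/- Let C_a, C_t, N_a, s be positive reals and J ≥ 2 a natural number. Suppose C_a < C_t and 0 < x < (C_a/C_t)^{1/(2(J−1))}, and set l̃ = (J+1)/2 + log(C_a/C_t)/(4·log x). Then (J+1)/2 < l̃ < J, and for every integer l with 1 ≤ l ≤ J one has γ_x(l) ≤ max(γ_x(⌊l̃⌋), γ_x(⌈l̃⌉)) (Proposition 1, Case I, first subcase). -/

import Mathlib

open Real

/-!
Writing `L = log x`, the two `x`-dependent terms of the denominator of `γ_x(l)` have the constant
product `C_a C_t x^{2(J-1)}`, and their ratio is `exp (4 L (l - l̃))`. Hence the denominator is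
`2 s √(C_a C_t) x^{J-1} cosh (2 L (l - l̃)) + s²`, so `γ_x(l)` decreases with `|l - l̃|`, and among
the integers the distance to `l̃` is minimised at `⌊l̃⌋` or at `⌈l̃⌉`. The bounds on `l̃` are the
hypothesis on `x` after taking logarithms.
-/

/-- Received SNR in the multi-IRS WIT system, as a function of the AIRS index `l`:
`γ_x(l) = C_a·C_t·N_a·x^{2(J−1)} / (s·C_a·x^{2(J−l)} + s·C_t·x^{2(l−1)} + s²)`. -/
noncomputable def snr (Ca Ct Na s : ℝ) (J : ℕ) (x l : ℝ) : ℝ :=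
  Ca * Ct * Na * x ^ (2 * ((J : ℝ) - 1)) /
    (s * Ca * x ^ (2 * ((J : ℝ) - l)) + s * Ct * x ^ (2 * (l - 1)) + s ^ 2)

/-- The paper's `l̃`. -/
noncomputable def snrPeak (Ca Ct : ℝ) (J : ℕ) (x : ℝ) : ℝ :=
  ((J : ℝ) + 1) / 2 + log (Ca / Ct) / (4 * log x)

theorem Int.abs_floor_sub_le_or_abs_ceil_sub_le {α : Type*} [Field α] [LinearOrder α]
    [IsStrictOrderedRing α] [FloorRing α] (t : α) (l : ℤ) :
    |(⌊t⌋ : α) - t| ≤ |(l : α) - t| ∨ |(⌈t⌉ : α) - t| ≤ |(l : α) - t| := by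
  rcases le_or_gt l ⌊t⌋ with hl | hl
  · left
    have hlt : (l : α) ≤ ⌊t⌋ := by exact_mod_cast hl
    have hft := Int.floor_le t
    rw [abs_of_nonpos (sub_nonpos.2 hft), abs_of_nonpos (by linarith)]
    linarith
  · right
    have hlt : (⌈t⌉ : α) ≤ l := by exact_mod_cast (Int.ceil_le_floor_add_one t).trans hl
    have hct := Int.le_ceil t
    rw [abs_of_nonneg (sub_nonneg.2 hct), abs_of_nonneg (by linarith)]
    linarith

theorem snr_eq_cosh {Ca Ct : ℝ} (Na s : ℝ) (hCa : 0 < Ca) (hCt : 0 < Ct) (J : ℕ) {x : ℝ}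
    (hx0 : 0 < x) (hx1 : x ≠ 1) (l : ℝ) :
    snr Ca Ct Na s J x l = Ca * Ct * Na * x ^ (2 * ((J : ℝ) - 1)) /
      (2 * s * √(Ca * Ct) * x ^ ((J : ℝ) - 1) * cosh (2 * log x * (l - snrPeak Ca Ct J x))
        + s ^ 2) := by
  have hL : log x ≠ 0 := log_ne_zero_of_pos_of_ne_one hx0 hx1
  have hsqrt : √(Ca * Ct) = exp ((log Ca + log Ct) / 2) := by
    rw [sqrt_eq_rpow, rpow_def_of_pos (mul_pos hCa hCt), log_mul hCa.ne' hCt.ne']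
    ring_nf
  have hexp (C p : ℝ) (hC : 0 < C) : C * x ^ p = exp (log C + log x * p) := by
    rw [exp_add, exp_log hC, rpow_def_of_pos hx0]
  have hpeak : 2 * log x * (l - snrPeak Ca Ct J x)
      = log x * (2 * l - J - 1) + (log Ct - log Ca) / 2 := by
    rw [snrPeak, log_div hCa.ne' hCt.ne']
    field_simp
    ring
  have hdenom : Ca * x ^ (2 * ((J : ℝ) - l)) + Ct * x ^ (2 * (l - 1))
      = 2 * √(Ca * Ct) * x ^ ((J : ℝ) - 1) * cosh (2 * log x * (l - snrPeak Ca Ct J x)) := by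
    set y := log x * (2 * l - J - 1) + (log Ct - log Ca) / 2
    set g := (log Ca + log Ct) / 2 + log x * ((J : ℝ) - 1)
    rw [hexp Ca _ hCa, hexp Ct _ hCt, hsqrt, rpow_def_of_pos hx0, hpeak, cosh_eq,
      show log Ca + log x * (2 * ((J : ℝ) - l)) = g - y by ring,
      show log Ct + log x * (2 * (l - 1)) = g + y by ring, exp_sub g, exp_add g, exp_neg, exp_add]
    field_simp
    ring
  rw [snr]
  congr 1
  linear_combination s * hdenom

theorem snr_le_snr_of_abs_sub_le {Ca Ct Na s : ℝ} (hCa : 0 < Ca) (hCt : 0 < Ct) (hNa : 0 ≤ Na)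
    (hs : 0 < s) (J : ℕ) {x : ℝ} (hx0 : 0 < x) (hx1 : x ≠ 1) {l m : ℝ}
    (h : |m - snrPeak Ca Ct J x| ≤ |l - snrPeak Ca Ct J x|) :
    snr Ca Ct Na s J x l ≤ snr Ca Ct Na s J x m := by
  rw [snr_eq_cosh Na s hCa hCt J hx0 hx1, snr_eq_cosh Na s hCa hCt J hx0 hx1]
  have hcosh : cosh (2 * log x * (m - snrPeak Ca Ct J x))
      ≤ cosh (2 * log x * (l - snrPeak Ca Ct J x)) := by
    rw [cosh_le_cosh, abs_mul _ (m - _), abs_mul _ (l - _)]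
    exact mul_le_mul_of_nonneg_left h (abs_nonneg _)
  have := rpow_pos_of_pos hx0 ((J : ℝ) - 1)
  gcongr

theorem two_mul_sub_one_mul_log_lt_log {r x : ℝ} (hr : 0 < r) (hx0 : 0 < x) {J : ℕ}
    (hJ : 1 < J) (hx : x < r ^ (1 / (2 * ((J : ℝ) - 1)))) :
    2 * ((J : ℝ) - 1) * log x < log r := by
  have hJ' : (0 : ℝ) < 2 * ((J : ℝ) - 1) := by
    have : (1 : ℝ) < J := by exact_mod_cast hJ
    linarith
  have := log_lt_log hx0 hx
  rw [log_rpow hr, one_div, inv_mul_eq_div, lt_div_iff₀ hJ', mul_comm] at this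
  exact this

theorem snrPeak_mem_Ioo {Ca Ct : ℝ} (hCa : 0 < Ca) (hCaCt : Ca < Ct) {J : ℕ} (hJ : 1 < J) {x : ℝ}
    (hx : 2 * ((J : ℝ) - 1) * log x < log (Ca / Ct)) :
    snrPeak Ca Ct J x ∈ Set.Ioo (((J : ℝ) + 1) / 2) J := by
  have hJ' : (1 : ℝ) < J := by exact_mod_cast hJ
  have hc : log (Ca / Ct) < 0 :=
    log_neg (div_pos hCa (hCa.trans hCaCt)) ((div_lt_one (hCa.trans hCaCt)).2 hCaCt)
  have hL : 4 * log x < 0 := by nlinarith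
  have hq : 0 < log (Ca / Ct) / (4 * log x) := div_pos_of_neg_of_neg hc hL
  have hq' : log (Ca / Ct) / (4 * log x) < ((J : ℝ) - 1) / 2 := by
    rw [div_lt_iff_of_neg hL]
    linarith
  constructor <;> rw [snrPeak] <;> linarith

/-- Proposition 1, Case I, first subcase: if `C_a < C_t` and
`0 < x < (C_a/C_t)^{1/(2(J−1))}`, then `l̃ = (J+1)/2 + log(C_a/C_t)/(4·log x)` satisfies
`(J+1)/2 < l̃ < J`, and the received SNR at any integer AIRS location `1 ≤ l ≤ J` is at most
the larger of the SNRs at `⌊l̃⌋` and `⌈l̃⌉`. -/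
theorem stmt_4 (Ca Ct Na s : ℝ) (hCa : 0 < Ca) (hCt : 0 < Ct) (hNa : 0 < Na) (hs : 0 < s)
    (J : ℕ) (hJ : 2 ≤ J) (x : ℝ)
    (hCaCt : Ca < Ct)
    (hx0 : 0 < x) (hxub : x < (Ca / Ct) ^ (1 / (2 * ((J : ℝ) - 1)))) :
    (((J : ℝ) + 1) / 2 < ((J : ℝ) + 1) / 2 + Real.log (Ca / Ct) / (4 * Real.log x)) ∧
    (((J : ℝ) + 1) / 2 + Real.log (Ca / Ct) / (4 * Real.log x) < (J : ℝ)) ∧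
    ∀ l : ℤ, 1 ≤ l → l ≤ (J : ℤ) →
      snr Ca Ct Na s J x (l : ℝ) ≤
        max (snr Ca Ct Na s J x ((⌊((J : ℝ) + 1) / 2 + Real.log (Ca / Ct) / (4 * Real.log x)⌋ : ℤ) : ℝ))
            (snr Ca Ct Na s J x ((⌈((J : ℝ) + 1) / 2 + Real.log (Ca / Ct) / (4 * Real.log x)⌉ : ℤ) : ℝ)) := by
  rw [show ((J : ℝ) + 1) / 2 + log (Ca / Ct) / (4 * log x) = snrPeak Ca Ct J x from rfl]
  have hlog := two_mul_sub_one_mul_log_lt_log (div_pos hCa hCt) hx0 hJ hxub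
  have hpeak := snrPeak_mem_Ioo hCa hCaCt hJ hlog
  have hx1 : x ≠ 1 := by
    -- at `x = 1` the quotient in `l̃` is `log (Ca / Ct) / 0 = 0`
    rintro rfl
    exact hpeak.1.ne' (by simp [snrPeak])
  refine ⟨hpeak.1, hpeak.2, fun l _ _ => ?_⟩
  rcases Int.abs_floor_sub_le_or_abs_ceil_sub_le (snrPeak Ca Ct J x) l with h | h
  · exact (snr_le_snr_of_abs_sub_le hCa hCt hNa.le hs J hx0 hx1 h).trans (le_max_left _ _)
  · exact (snr_le_snr_of_abs_sub_le hCa hCt hNa.le hs J hx0 hx1 h).trans (le_max_right _ _)
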